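/- arXiv:1411.1749 — 3 statements merged into one kernel-verified Lean document; each statement's English description precedes it below -/
import Mathlib

section
/- Let n ≥ 3, let G be a simple graph on n vertices, and let t ≤ t_max, where t_max is the largest natural number with t_max·(t_max+1) < n−2. Then C(n,3) − t·(n−2) ≤ f(G) ≤ C(n,3) − t·(n−t−1) if and only if there exists a graph K on the vertex set of G that is a vertex-disjoint union of two complete graphs (of orders summing to n, one possibly empty) such that the symmetric difference of the edge sets of G and K has exactly t elements. -/
open Finset

open Classical in
/-- A triple of distinct vertices is *frustrated* if it induces an odd number of edges. -/
noncomputable def frustrated {V : Type*} (G : SimpleGraph V) (u v w : V) : Prop :=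
  Odd ((if G.Adj u v then 1 else 0) + (if G.Adj u w then 1 else 0) +
       (if G.Adj v w then 1 else 0) : ℕ)

/-- The number of frustrated triangles of `G`: the number of 3-element vertex subsets
inducing an odd number of edges. -/
noncomputable def fCount {V : Type*} [Fintype V] [DecidableEq V] (G : SimpleGraph V) : ℕ := by
  classical
  exact ((Finset.univ.powersetCard 3).filter
    (fun s : Finset V => ∃ u v w : V, u ≠ v ∧ u ≠ w ∧ v ≠ w ∧ s = {u, v, w} ∧
      frustrated G u v w)).card

/-- `K` is a vertex-disjoint union of two complete graphs: the vertex set splits into two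
(possibly empty) parts such that the edges are exactly the pairs of distinct vertices
lying in the same part. -/
def IsTwoCliques {V : Type*} (K : SimpleGraph V) : Prop :=
  ∃ X : Set V, ∀ u v : V, K.Adj u v ↔ (u ≠ v ∧ (u ∈ X ↔ v ∈ X))

/-!
Write `K_X` for the two-cliques graph with parts `X`, `Xᶜ`, put `H_X = G ∆ K_X` and let `m`
be its number of edges and `g` its number of triples spanning an odd number of edges. Every
triple spans 1 or 3 edges of `K_X`, so `f(G) = C(n,3) - g`. Double counting edges in triples
gives `m(n-1-m) ≤ g ≤ m(n-2)`, which is the backward direction. For the forward direction take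
`X` minimising `m`. Switching `H_X` at the neighbourhood `N` of a vertex `v` gives `H_{X ∆ N}`,
in which `v` is isolated and whose edges `ab` are exactly the odd triples `vab` of `H_X`; so by
minimality every vertex lies in at least `m` odd triples, i.e. `nm ≤ 3g`. Together with
`t(t+1) < n-2` these inequalities leave only `m = t`.
-/

open scoped symmDiff

lemma le_of_triangle_count_bounds {n t m g : ℤ} (ht : 0 ≤ t) (htn : t * (t + 1) < n - 2)
    (hm : m * (n - 1 - m) ≤ g) (hnm : n * m ≤ 3 * g) (hg : g ≤ t * (n - 2)) : m ≤ t := by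
  by_contra! htm
  -- On `[t + 1, n - 2 - t]` the concave `m (n - 1 - m)` exceeds `t (n - 2) ≥ g`; beyond, `nm ≤ 3g`.
  rcases le_or_gt m (n - 2 - t) with hmn | hmn
  · nlinarith [mul_nonneg (by linarith : 0 ≤ m - t - 1) (by linarith : 0 ≤ n - 2 - t - m)]
  · have ht12 : 0 ≤ (t - 1) * (t - 2) := by
      rcases le_or_gt t 1 with h | h
      · exact mul_nonneg_of_nonpos_of_nonpos (by linarith) (by linarith)
      · exact mul_nonneg (by linarith) (by linarith)
    nlinarith [mul_nonneg (by linarith : 0 ≤ n - 1) (by nlinarith : 0 ≤ n - 1 - 4 * t),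
      mul_nonneg (by linarith : 0 ≤ n) (by linarith : 0 ≤ m - (n - 1 - t))]

lemma eq_of_triangle_count_bounds {n t m g : ℤ} (ht : 0 ≤ t) (htn : t * (t + 1) < n - 2)
    (hm : m * (n - 1 - m) ≤ g) (hm' : g ≤ m * (n - 2)) (hnm : n * m ≤ 3 * g)
    (hg : t * (n - t - 1) ≤ g) (hg' : g ≤ t * (n - 2)) : m = t := by
  refine le_antisymm (le_of_triangle_count_bounds ht htn hm hnm hg') (not_lt.mp fun hmt => ?_)
  nlinarith [mul_nonneg (by linarith : 0 ≤ t - 1 - m) (by nlinarith : 0 ≤ n - 2)]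

section Counting

variable {V : Type*} [DecidableEq V]

lemma toFinset_union_toFinset_eq_of_mem_sym2 {s : Finset V} (hs : #s = 3) {e f : Sym2 V}
    (he : ¬e.IsDiag) (hf : ¬f.IsDiag) (hef : e ≠ f) (hes : e ∈ s.sym2) (hfs : f ∈ s.sym2) :
    e.toFinset ∪ f.toFinset = s := by
  have hsub : e.toFinset ∪ f.toFinset ⊆ s :=
    union_subset (by simpa [subset_iff] using hes) (by simpa [subset_iff] using hfs)
  refine eq_of_subset_of_card_le hsub ?_
  by_contra! hlt
  have hu : ∀ d : Sym2 V, ¬d.IsDiag → d.toFinset ⊆ e.toFinset ∪ f.toFinset →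
      d.toFinset = e.toFinset ∪ f.toFinset := fun d hd hdu =>
    eq_of_subset_of_card_le hdu (by rw [Sym2.card_toFinset_of_not_isDiag d hd]; omega)
  have hef' := (hu e he subset_union_left).trans (hu f hf subset_union_right).symm
  exact hef (Sym2.ext fun x => by rw [← Sym2.mem_toFinset, hef', Sym2.mem_toFinset])

variable [Fintype V]

lemma card_filter_powersetCard_superset (t : Finset V) :
    #{s ∈ (univ : Finset V).powersetCard (#t + 1) | t ⊆ s} = Fintype.card V - #t := by
  rw [← card_compl]
  symm
  refine card_bij (fun w _ => insert w t) (fun w hw => ?_) (fun w hw w' _ h => ?_) fun s hs => ?_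
  · rw [mem_compl] at hw
    simp [card_insert_of_notMem hw, subset_insert]
  · rw [mem_compl] at hw
    have hw' := h ▸ mem_insert_self w t
    simpa [hw] using hw'
  · obtain ⟨hcard, hts⟩ := mem_filter.mp hs
    have hst : #(s \ t) = 1 := by
      rw [card_sdiff_of_subset hts, mem_powersetCard_univ.mp hcard, Nat.add_sub_cancel_left]
    obtain ⟨w, hw⟩ := card_eq_one.mp hst
    refine ⟨w, mem_compl.mpr (mem_sdiff.mp (hw ▸ mem_singleton_self w)).2, ?_⟩
    rw [← sdiff_union_of_subset hts, hw, insert_eq]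

lemma card_filter_mem_sym2_of_not_isDiag {e : Sym2 V} (he : ¬e.IsDiag) :
    #{s ∈ (univ : Finset V).powersetCard 3 | e ∈ s.sym2} = Fintype.card V - 2 := by
  have h := card_filter_powersetCard_superset e.toFinset
  rw [Sym2.card_toFinset_of_not_isDiag e he] at h
  convert h using 3 with s
  simp [subset_iff]

end Counting

namespace SimpleGraph

variable {V : Type*}

/-- `(cut X)ᶜ` is the two-cliques graph with parts `X` and `Xᶜ`, and `H ↦ H ∆ cut S` is
switching at `S`. -/
def cut (S : Set V) : SimpleGraph V where
  Adj u v := ¬(u ∈ S ↔ v ∈ S)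
  symm := ⟨fun _ _ h h' => h h'.symm⟩
  loopless := ⟨fun _ h => h Iff.rfl⟩

@[simp]
lemma cut_adj {S : Set V} {u v : V} : (cut S).Adj u v ↔ ¬(u ∈ S ↔ v ∈ S) := .rfl

lemma symmDiff_adj {G K : SimpleGraph V} {u v : V} :
    (G ∆ K).Adj u v ↔ ¬(G.Adj u v ↔ K.Adj u v) := by
  simp only [symmDiff_def, sup_adj, sdiff_adj]
  tauto

lemma edgeSet_symmDiff (G K : SimpleGraph V) : (G ∆ K).edgeSet = G.edgeSet ∆ K.edgeSet := by
  simp only [symmDiff_def, edgeSet_sup, edgeSet_sdiff]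
  rfl

lemma isTwoCliques_iff_exists_eq_compl_cut {K : SimpleGraph V} :
    IsTwoCliques K ↔ ∃ S, K = (cut S)ᶜ := by
  simp only [IsTwoCliques, SimpleGraph.ext_iff, funext_iff, compl_adj, cut_adj, not_not,
    eq_iff_iff]

lemma compl_cut_symmDiff_cut (X S : Set V) : (cut X)ᶜ ∆ cut S = (cut (X ∆ S))ᶜ := by
  ext u v
  obtain rfl | huv := eq_or_ne u v
  · simp
  · simp only [symmDiff_adj, compl_adj, cut_adj, Set.mem_symmDiff, ne_eq, huv]
    tauto

lemma not_adj_symmDiff_cut_neighborSet (H : SimpleGraph V) (v w : V) :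
    ¬(H ∆ cut (H.neighborSet v)).Adj v w := by
  simp [symmDiff_adj]

section Finite

open scoped Classical

variable [Fintype V] [DecidableEq V]

omit [DecidableEq V] in
lemma ncard_edgeSet_symmDiff (G K : SimpleGraph V) :
    (G.edgeSet ∆ K.edgeSet).ncard = #(G ∆ K).edgeFinset := by
  rw [← edgeSet_symmDiff, ← coe_edgeFinset, Set.ncard_coe_finset]

lemma card_edgeFinset_inter_sym2_triple (H : SimpleGraph V) {u v w : V} (huv : u ≠ v)
    (huw : u ≠ w) (hvw : v ≠ w) :
    #(H.edgeFinset ∩ ({u, v, w} : Finset V).sym2) =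
      (if H.Adj u v then 1 else 0) + (if H.Adj u w then 1 else 0) +
        (if H.Adj v w then 1 else 0) := by
  have h : H.edgeFinset ∩ ({u, v, w} : Finset V).sym2 =
      ({s(u, v), s(u, w), s(v, w)} : Finset (Sym2 V)).filter (· ∈ H.edgeSet) := by
    ext e
    induction e with
    | _ a b =>
      simp only [mem_inter, mem_edgeFinset, mem_edgeSet, Finset.mk_mem_sym2_iff, mem_insert,
        mem_singleton, mem_filter, Sym2.eq_iff]
      constructor
      · rintro ⟨hab, ha, hb⟩
        have := hab.ne
        refine ⟨?_, hab⟩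
        rcases ha with rfl | rfl | rfl <;> rcases hb with rfl | rfl | rfl <;> tauto
      · rintro ⟨he, hab⟩
        refine ⟨hab, ?_⟩
        rcases he with (⟨rfl, rfl⟩ | ⟨rfl, rfl⟩) | (⟨rfl, rfl⟩ | ⟨rfl, rfl⟩) |
          (⟨rfl, rfl⟩ | ⟨rfl, rfl⟩) <;> simp
  rw [h, card_filter, sum_insert (by simp [huv, huw, hvw]), sum_insert (by simp [huv, huw]),
    sum_singleton, add_assoc]
  rfl

lemma odd_ite_add_ite_add_ite_iff (p q r : Prop) [Decidable p] [Decidable q] [Decidable r] :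
    Odd ((if p then 1 else 0) + (if q then 1 else 0) + (if r then 1 else 0) : ℕ) ↔
      (p ↔ (q ↔ r)) := by
  by_cases p <;> by_cases q <;> by_cases r <;> simp_all [Nat.odd_iff]

lemma odd_card_edgeFinset_inter_sym2_triple_iff (H : SimpleGraph V) {u v w : V} (huv : u ≠ v)
    (huw : u ≠ w) (hvw : v ≠ w) :
    Odd #(H.edgeFinset ∩ ({u, v, w} : Finset V).sym2) ↔
      (H.Adj u v ↔ (H.Adj u w ↔ H.Adj v w)) := by
  rw [card_edgeFinset_inter_sym2_triple H huv huw hvw, odd_ite_add_ite_add_ite_iff]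

noncomputable def oddTriples (H : SimpleGraph V) : Finset (Finset V) :=
  {s ∈ univ.powersetCard 3 | Odd #(H.edgeFinset ∩ s.sym2)}

lemma fCount_eq_card_oddTriples (G : SimpleGraph V) : fCount G = #(oddTriples G) := by
  unfold fCount oddTriples
  congr 1
  refine filter_congr fun s hs => ⟨?_, fun hodd => ?_⟩
  · rintro ⟨u, v, w, huv, huw, hvw, rfl, hfr⟩
    rwa [card_edgeFinset_inter_sym2_triple G huv huw hvw]
  · obtain ⟨u, v, w, huv, huw, hvw, rfl⟩ := card_eq_three.mp (mem_powersetCard_univ.mp hs)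
    refine ⟨u, v, w, huv, huw, hvw, rfl, ?_⟩
    rwa [card_edgeFinset_inter_sym2_triple G huv huw hvw] at hodd

lemma odd_card_edgeFinset_inter_sym2_symmDiff_compl_cut_iff (G : SimpleGraph V) (X : Set V)
    {s : Finset V} (hs : #s = 3) :
    Odd #((G ∆ (cut X)ᶜ).edgeFinset ∩ s.sym2) ↔ ¬Odd #(G.edgeFinset ∩ s.sym2) := by
  obtain ⟨u, v, w, huv, huw, hvw, rfl⟩ := card_eq_three.mp hs
  simp only [odd_card_edgeFinset_inter_sym2_triple_iff _ huv huw hvw, symmDiff_adj, compl_adj,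
    cut_adj, ne_eq, huv, huw, hvw, not_false_eq_true, true_and, not_not]
  tauto

lemma card_oddTriples_add_card_oddTriples_symmDiff_compl_cut (G : SimpleGraph V) (X : Set V) :
    #(oddTriples G) + #(oddTriples (G ∆ (cut X)ᶜ)) = (Fintype.card V).choose 3 := by
  have h : oddTriples (G ∆ (cut X)ᶜ) =
      {s ∈ (univ : Finset V).powersetCard 3 | ¬Odd #(G.edgeFinset ∩ s.sym2)} :=
    filter_congr fun s hs =>
      odd_card_edgeFinset_inter_sym2_symmDiff_compl_cut_iff G X (mem_powersetCard_univ.mp hs)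
  rw [oddTriples, h, card_filter_add_card_filter_not, card_powersetCard, card_univ]

lemma sum_card_edgeFinset_inter_sym2 (H : SimpleGraph V) :
    ∑ s ∈ (univ : Finset V).powersetCard 3, #(H.edgeFinset ∩ s.sym2) =
      #H.edgeFinset * (Fintype.card V - 2) := by
  calc ∑ s ∈ (univ : Finset V).powersetCard 3, #(H.edgeFinset ∩ s.sym2)
      = ∑ e ∈ H.edgeFinset, #{s ∈ (univ : Finset V).powersetCard 3 | e ∈ s.sym2} := by
        simp_rw [← filter_mem_eq_inter]
        exact sum_card_bipartiteAbove_eq_sum_card_bipartiteBelow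
          (fun (s : Finset V) (e : Sym2 V) => e ∈ s.sym2)
    _ = ∑ e ∈ H.edgeFinset, (Fintype.card V - 2) :=
        sum_congr rfl fun e he =>
          card_filter_mem_sym2_of_not_isDiag (H.not_isDiag_of_mem_edgeSet (mem_edgeFinset.mp he))
    _ = #H.edgeFinset * (Fintype.card V - 2) := by rw [sum_const, smul_eq_mul]

lemma card_oddTriples_le (H : SimpleGraph V) :
    #(oddTriples H) ≤ #H.edgeFinset * (Fintype.card V - 2) := by
  rw [← sum_card_edgeFinset_inter_sym2]
  calc #(oddTriples H) = ∑ s ∈ oddTriples H, 1 := card_eq_sum_ones _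
    _ ≤ ∑ s ∈ oddTriples H, #(H.edgeFinset ∩ s.sym2) :=
        sum_le_sum fun s hs => (mem_filter.mp hs).2.pos
    _ ≤ _ := sum_le_sum_of_subset (filter_subset _ _)

lemma sum_choose_two_card_edgeFinset_inter_sym2_le (H : SimpleGraph V) :
    ∑ s ∈ (univ : Finset V).powersetCard 3, (#(H.edgeFinset ∩ s.sym2)).choose 2 ≤
      (#H.edgeFinset).choose 2 := by
  calc ∑ s ∈ (univ : Finset V).powersetCard 3, (#(H.edgeFinset ∩ s.sym2)).choose 2
      = ∑ s ∈ (univ : Finset V).powersetCard 3,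
          #((H.edgeFinset.powersetCard 2).bipartiteAbove (fun s p => p ⊆ s.sym2) s) := by
        refine sum_congr rfl fun s _ => ?_
        rw [← card_powersetCard]
        congr 1
        ext p
        simp [mem_powersetCard, subset_inter_iff, and_right_comm]
    _ = ∑ p ∈ H.edgeFinset.powersetCard 2,
          #(((univ : Finset V).powersetCard 3).bipartiteBelow (fun s p => p ⊆ s.sym2) p) :=
        sum_card_bipartiteAbove_eq_sum_card_bipartiteBelow _
    _ ≤ ∑ p ∈ H.edgeFinset.powersetCard 2, 1 := by
        refine sum_le_sum fun p hp => card_le_one.mpr fun s hs s' hs' => ?_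
        obtain ⟨hpE, hp2⟩ := mem_powersetCard.mp hp
        obtain ⟨e, f, hef, rfl⟩ := card_eq_two.mp hp2
        simp only [mem_bipartiteBelow, mem_powersetCard_univ, insert_subset_iff,
          singleton_subset_iff] at hs hs' hpE
        have he := H.not_isDiag_of_mem_edgeSet (mem_edgeFinset.mp hpE.1)
        have hf := H.not_isDiag_of_mem_edgeSet (mem_edgeFinset.mp hpE.2)
        rw [← toFinset_union_toFinset_eq_of_mem_sym2 hs.1 he hf hef hs.2.1 hs.2.2,
          toFinset_union_toFinset_eq_of_mem_sym2 hs'.1 he hf hef hs'.2.1 hs'.2.2]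
    _ = (#H.edgeFinset).choose 2 := by simp

lemma card_edgeFinset_mul_le (H : SimpleGraph V) :
    #H.edgeFinset * (Fintype.card V - 2) ≤
      #(oddTriples H) + #H.edgeFinset * (#H.edgeFinset - 1) := by
  have hle : ∀ s ∈ (univ : Finset V).powersetCard 3, #(H.edgeFinset ∩ s.sym2) ≤
      (if Odd #(H.edgeFinset ∩ s.sym2) then 1 else 0) +
        2 * (#(H.edgeFinset ∩ s.sym2)).choose 2 := by
    intro s hs
    obtain ⟨u, v, w, huv, huw, hvw, rfl⟩ := card_eq_three.mp (mem_powersetCard_univ.mp hs)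
    have h3 : #(H.edgeFinset ∩ ({u, v, w} : Finset V).sym2) ≤ 3 := by
      rw [card_edgeFinset_inter_sym2_triple H huv huw hvw]
      split_ifs <;> norm_num
    generalize #(H.edgeFinset ∩ ({u, v, w} : Finset V).sym2) = j at h3 ⊢
    interval_cases j <;> decide
  calc #H.edgeFinset * (Fintype.card V - 2)
      = ∑ s ∈ (univ : Finset V).powersetCard 3, #(H.edgeFinset ∩ s.sym2) :=
        (sum_card_edgeFinset_inter_sym2 H).symm
    _ ≤ ∑ s ∈ (univ : Finset V).powersetCard 3,
          ((if Odd #(H.edgeFinset ∩ s.sym2) then 1 else 0) +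
            2 * (#(H.edgeFinset ∩ s.sym2)).choose 2) := sum_le_sum hle
    _ ≤ #(oddTriples H) + 2 * (#H.edgeFinset).choose 2 := by
        rw [sum_add_distrib, ← mul_sum, ← card_filter]
        exact add_le_add_right
          (Nat.mul_le_mul_left 2 (sum_choose_two_card_edgeFinset_inter_sym2_le H)) _
    _ = #(oddTriples H) + #H.edgeFinset * (#H.edgeFinset - 1) := by
        rw [Nat.choose_two_right, Nat.mul_div_cancel' (Nat.even_mul_pred_self _).two_dvd]

lemma card_oddTriples_bounds (H : SimpleGraph V) (hV : 2 ≤ Fintype.card V) :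
    (#H.edgeFinset : ℤ) * (Fintype.card V - 1 - #H.edgeFinset) ≤ #(oddTriples H) ∧
      (#(oddTriples H) : ℤ) ≤ #H.edgeFinset * (Fintype.card V - 2) := by
  have h₁ := card_edgeFinset_mul_le H
  have h₂ := card_oddTriples_le H
  zify [hV] at h₁ h₂
  have hpred : (#H.edgeFinset : ℤ) * ((#H.edgeFinset - 1 : ℕ) : ℤ) =
      #H.edgeFinset * (#H.edgeFinset - 1) := by
    rcases (#H.edgeFinset).eq_zero_or_pos with h | h
    · simp [h]
    · rw [Nat.cast_pred h]
  constructor <;> linarith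

lemma symmDiff_cut_neighborSet_adj_iff (H : SimpleGraph V) {v a b : V} (hva : v ≠ a)
    (hvb : v ≠ b) (hab : a ≠ b) :
    (H ∆ cut (H.neighborSet v)).Adj a b ↔ Odd #(H.edgeFinset ∩ ({v, a, b} : Finset V).sym2) := by
  rw [odd_card_edgeFinset_inter_sym2_triple_iff H hva hvb hab, symmDiff_adj, cut_adj,
    mem_neighborSet, mem_neighborSet]
  tauto

lemma card_edgeFinset_symmDiff_cut_neighborSet (H : SimpleGraph V) (v : V) :
    #(H ∆ cut (H.neighborSet v)).edgeFinset = #{s ∈ oddTriples H | v ∈ s} := by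
  have hv : ∀ e ∈ (H ∆ cut (H.neighborSet v)).edgeFinset, v ∉ e.toFinset := by
    intro e he hve
    induction e with
    | _ a b =>
      rw [mem_edgeFinset, mem_edgeSet] at he
      rcases Sym2.mem_iff.mp (Sym2.mem_toFinset.mp hve) with rfl | rfl
      · exact not_adj_symmDiff_cut_neighborSet H v b he
      · exact not_adj_symmDiff_cut_neighborSet H v a he.symm
  refine card_bij (fun e _ => insert v e.toFinset) (fun e he => ?_)
    (fun e he e' he' h => ?_) fun s hs => ?_
  · have hve := hv e he
    induction e with
    | _ a b =>
      rw [mem_edgeFinset, mem_edgeSet] at he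
      rw [Sym2.toFinset_mk_eq] at hve ⊢
      simp only [mem_insert, mem_singleton, not_or] at hve
      refine mem_filter.mpr ⟨mem_filter.mpr ⟨mem_powersetCard_univ.mpr ?_, ?_⟩,
        mem_insert_self _ _⟩
      · exact card_eq_three.mpr ⟨v, a, b, hve.1, hve.2, he.ne, rfl⟩
      · exact (symmDiff_cut_neighborSet_adj_iff H hve.1 hve.2 he.ne).mp he
  · have h' := congrArg (·.erase v) h
    simp only [erase_insert (hv e he), erase_insert (hv e' he')] at h'
    exact Sym2.ext fun x => by rw [← Sym2.mem_toFinset, h', Sym2.mem_toFinset]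
  · obtain ⟨hodd, hvs⟩ := mem_filter.mp hs
    obtain ⟨hs3, hodd⟩ := mem_filter.mp hodd
    obtain ⟨a, b, hab, hsab⟩ := card_eq_two.mp (by
      rw [card_erase_of_mem hvs, mem_powersetCard_univ.mp hs3] : #(s.erase v) = 2)
    have hva : v ≠ a := (ne_of_mem_erase (hsab ▸ mem_insert_self a {b})).symm
    have hvb : v ≠ b := (ne_of_mem_erase (hsab ▸ mem_insert_of_mem (mem_singleton_self b))).symm
    have hs : insert v (s(a, b)).toFinset = s := by
      rw [Sym2.toFinset_mk_eq, ← hsab, insert_erase hvs]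
    refine ⟨s(a, b), ?_, hs⟩
    rw [mem_edgeFinset, mem_edgeSet, symmDiff_cut_neighborSet_adj_iff H hva hvb hab]
    rwa [← Sym2.toFinset_mk_eq, hs]

lemma card_mul_card_edgeFinset_le_three_mul_card_oddTriples (H : SimpleGraph V)
    (hmin : ∀ S : Set V, #H.edgeFinset ≤ #(H ∆ cut S).edgeFinset) :
    Fintype.card V * #H.edgeFinset ≤ 3 * #(oddTriples H) :=
  calc Fintype.card V * #H.edgeFinset ≤ ∑ s ∈ oddTriples H, #s :=
        le_sum_card fun v => (hmin _).trans (card_edgeFinset_symmDiff_cut_neighborSet H v).le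
    _ = ∑ s ∈ oddTriples H, 3 :=
        sum_congr rfl fun s hs => mem_powersetCard_univ.mp (mem_filter.mp hs).1
    _ = 3 * #(oddTriples H) := by rw [sum_const, smul_eq_mul, mul_comm]

theorem fCount_bounds_iff_exists_isTwoCliques (G : SimpleGraph V) {t : ℕ}
    (ht : (t : ℤ) * (t + 1) < Fintype.card V - 2) :
    ((Fintype.card V).choose 3 - t * ((Fintype.card V : ℤ) - 2) ≤ fCount G ∧
      (fCount G : ℤ) ≤ (Fintype.card V).choose 3 - t * ((Fintype.card V : ℤ) - t - 1)) ↔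
      ∃ K : SimpleGraph V, IsTwoCliques K ∧ (G.edgeSet ∆ K.edgeSet).ncard = t := by
  have hV : 2 ≤ Fintype.card V := by
    have : (0 : ℤ) ≤ t * (t + 1) := by positivity
    omega
  have hf (X : Set V) :
      (fCount G : ℤ) = (Fintype.card V).choose 3 - #(oddTriples (G ∆ (cut X)ᶜ)) := by
    have := card_oddTriples_add_card_oddTriples_symmDiff_compl_cut G X
    rw [← fCount_eq_card_oddTriples] at this
    omega
  constructor
  · rintro ⟨h₁, h₂⟩
    obtain ⟨X, hX⟩ := Finite.exists_min fun X : Set V => #(G ∆ (cut X)ᶜ).edgeFinset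
    have hmin (S : Set V) : #(G ∆ (cut X)ᶜ).edgeFinset ≤ #(G ∆ (cut X)ᶜ ∆ cut S).edgeFinset := by
      rw [symmDiff_assoc, compl_cut_symmDiff_cut]
      exact hX _
    obtain ⟨h₃, h₄⟩ := card_oddTriples_bounds (G ∆ (cut X)ᶜ) hV
    have h₅ := card_mul_card_edgeFinset_le_three_mul_card_oddTriples _ hmin
    rw [hf X] at h₁ h₂
    refine ⟨(cut X)ᶜ, isTwoCliques_iff_exists_eq_compl_cut.mpr ⟨X, rfl⟩, ?_⟩
    rw [ncard_edgeSet_symmDiff]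
    exact_mod_cast eq_of_triangle_count_bounds (Int.natCast_nonneg t) ht h₃ h₄
      (by exact_mod_cast h₅) (by linarith) (by linarith)
  · rintro ⟨K, hK, rfl⟩
    obtain ⟨X, rfl⟩ := isTwoCliques_iff_exists_eq_compl_cut.mp hK
    obtain ⟨h₃, h₄⟩ := card_oddTriples_bounds (G ∆ (cut X)ᶜ) hV
    rw [ncard_edgeSet_symmDiff, hf X]
    constructor <;> linarith

end Finite

end SimpleGraph

theorem frustrated_triangles_upper_interval_iff_flip_two_cliques_general
    (n : ℕ) (G : SimpleGraph (Fin n)) (tmax : ℕ)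
    (htm : tmax * (tmax + 1) < n - 2)
    (t : ℕ) (ht : t ≤ tmax) :
    ((Nat.choose n 3 : ℤ) - t * ((n : ℤ) - 2) ≤ (fCount G : ℤ) ∧
      (fCount G : ℤ) ≤ (Nat.choose n 3 : ℤ) - t * ((n : ℤ) - t - 1)) ↔
      ∃ K : SimpleGraph (Fin n), IsTwoCliques K ∧
        (symmDiff G.edgeSet K.edgeSet).ncard = t := by
  have htn : t * (t + 1) < n - 2 := (Nat.mul_le_mul ht (Nat.succ_le_succ ht)).trans_lt htm
  have htn' : (t : ℤ) * (t + 1) < Fintype.card (Fin n) - 2 := by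
    zify [show 2 ≤ n by omega] at htn
    rwa [Fintype.card_fin]
  simpa only [Fintype.card_fin] using G.fCount_bounds_iff_exists_isTwoCliques htn'

theorem frustrated_triangles_upper_interval_iff_flip_two_cliques
    (n : ℕ) (hn : 3 ≤ n) (G : SimpleGraph (Fin n)) (tmax : ℕ)
    (htm : tmax * (tmax + 1) < n - 2)
    (htmax : ∀ t : ℕ, t * (t + 1) < n - 2 → t ≤ tmax)
    (t : ℕ) (ht : t ≤ tmax) :
    ((Nat.choose n 3 : ℤ) - t * ((n : ℤ) - 2) ≤ (fCount G : ℤ) ∧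
      (fCount G : ℤ) ≤ (Nat.choose n 3 : ℤ) - t * ((n : ℤ) - t - 1)) ↔
      ∃ K : SimpleGraph (Fin n), IsTwoCliques K ∧
        (symmDiff G.edgeSet K.edgeSet).ncard = t :=
  frustrated_triangles_upper_interval_iff_flip_two_cliques_general n G tmax htm t ht
end

section
/- Let n ≥ 5 be odd and let s be the largest natural number t ≥ 1 such that (t−1)·(n−2) + 2 < (t+1)·(n−t−2) (such t exists since for t = 1 one has 2 < 2·(n−3)). Then at least one of the two numbers (s−1)·(n−2) + 1 and (s−1)·(n−2) + 2 is not equal to f(G) for any simple graph G on n vertices. -/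
open Finset

/-!
Switching a graph across a cut flips an even number of the three pairs of every triple, so it
preserves frustration; replace `G` by a graph `H` with the fewest edges, `m`, in its switching
class. Summing the number of edges over all triples gives `m (n - 2)`: this bounds `f` from above,
has the parity of `f`, and exceeds `f` by at most `2 C(m, 2)`, since two distinct edges lie in at
most one common triple. Switching `H` at the neighbourhood of a vertex `v` isolates `v` and keeps
the frustrated triples through `v`, which then correspond to the edges of the switched graph; by
minimality every vertex lies in at least `m` frustrated triples, so `n m ≤ 3 f`.

For `f = (s - 1)(n - 2) + 2` these constraints are incompatible: parity (`n - 2` is odd) rules out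
`m = s`, the upper bound rules out `m < s`, the bound `m (n - 1 - m) ≤ f` rules out
`s < m ≤ n - s - 2` by the defining inequality of `s`, and `n m ≤ 3 f` rules out larger `m`.
-/

lemma Nat.two_mul_choose_two (m : ℕ) : 2 * m.choose 2 = m * (m - 1) := by
  rw [Nat.choose_two_right, Nat.two_mul_div_two_of_even (Nat.even_mul_pred_self m)]

namespace Finset

variable {α : Type*}

lemma card_filter_odd_le_sum (s : Finset α) (f : α → ℕ) :
    #{x ∈ s | Odd (f x)} ≤ ∑ x ∈ s, f x := by
  rw [card_filter]
  gcongr with x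
  split_ifs with h
  · exact h.pos
  · exact Nat.zero_le _

lemma card_filter_odd_modEq_sum (s : Finset α) (f : α → ℕ) :
    #{x ∈ s | Odd (f x)} ≡ ∑ x ∈ s, f x [MOD 2] := by
  rw [Nat.ModEq, card_filter, sum_nat_mod, sum_nat_mod _ _ f]
  congr 1
  refine sum_congr rfl fun x _ => ?_
  split_ifs with h
  · rw [Nat.odd_iff.1 h]
  · rw [Nat.not_odd_iff.1 h]

lemma sum_le_card_filter_odd_add_two_mul_sum_choose_two (s : Finset α) (f : α → ℕ) :
    ∑ x ∈ s, f x ≤ #{x ∈ s | Odd (f x)} + 2 * ∑ x ∈ s, (f x).choose 2 := by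
  rw [card_filter, mul_sum, ← sum_add_distrib]
  gcongr with x
  rcases Nat.lt_or_ge (f x) 2 with h | h
  · interval_cases f x <;> simp
  · rw [Nat.two_mul_choose_two]
    exact le_add_left (Nat.le_mul_of_pos_right _ (by omega))

variable [DecidableEq α]

lemma sum_card_filter_mem [Fintype α] (F : Finset (Finset α)) :
    ∑ a, #{s ∈ F | a ∈ s} = ∑ s ∈ F, #s := by
  simp only [card_filter]
  rw [sum_comm]
  simp

lemma card_filter_superset_powersetCard_succ [Fintype α] (p : Finset α) :
    #{t ∈ univ.powersetCard (#p + 1) | p ⊆ t} = Fintype.card α - #p := by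
  rw [← card_compl]
  symm
  refine card_bij (fun a _ => insert a p) (fun a ha => ?_) (fun a ha b _ hab => ?_) fun t ht => ?_
  · rw [mem_compl] at ha
    simp [card_insert_of_notMem ha, subset_insert]
  · have : a ∈ insert b p := hab ▸ mem_insert_self a p
    exact (mem_insert.1 this).resolve_right (mem_compl.1 ha)
  · obtain ⟨htcard, hpt⟩ := mem_filter.1 ht
    rw [mem_powersetCard_univ] at htcard
    obtain ⟨a, ha⟩ : (t \ p).Nonempty := by
      rw [← card_pos, card_sdiff_of_subset hpt]
      omega
    rw [mem_sdiff] at ha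
    refine ⟨a, mem_compl.2 ha.2, eq_of_subset_of_card_le (insert_subset ha.1 hpt) ?_⟩
    rw [card_insert_of_notMem ha.2, htcard]

lemma powersetCard_two_triple {u v w : α} (huv : u ≠ v) (huw : u ≠ w) (hvw : v ≠ w) :
    ({u, v, w} : Finset α).powersetCard 2 = {{u, v}, {u, w}, {v, w}} := by
  rw [powersetCard_succ_insert (by simp [huv, huw]), powersetCard_succ_insert (by simp [hvw]),
    powersetCard_eq_empty.2 (by simp)]
  ext
  simp only [powersetCard_one, empty_union, map_insert, map_singleton, Function.Embedding.coeFn_mk,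
    image_insert, image_singleton, mem_union, mem_insert, mem_singleton]
  tauto

lemma two_lt_card_union {p q : Finset α} (hp : #p = 2) (hq : #q = 2) (hpq : p ≠ q) :
    2 < #(p ∪ q) := by
  by_contra! h
  exact hpq ((eq_of_subset_of_card_le subset_union_left (by omega)).trans
    (eq_of_subset_of_card_le subset_union_right (by omega)).symm)

end Finset

namespace SimpleGraph

variable {V : Type*}

/-- Seidel switching: adjacency is flipped exactly across the cut `(S, Sᶜ)`. -/
def switch (G : SimpleGraph V) (S : Set V) : SimpleGraph V where
  Adj u v := u ≠ v ∧ (G.Adj u v ↔ (u ∈ S ↔ v ∈ S))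
  symm := ⟨fun u v ⟨h, h'⟩ => ⟨h.symm, by rw [G.adj_comm]; tauto⟩⟩
  loopless := ⟨fun _ h => h.1 rfl⟩

variable (G : SimpleGraph V)

@[simp]
lemma switch_adj {S : Set V} {u v : V} :
    (G.switch S).Adj u v ↔ u ≠ v ∧ (G.Adj u v ↔ (u ∈ S ↔ v ∈ S)) := Iff.rfl

lemma switch_switch (S T : Set V) : (G.switch S).switch T = G.switch (symmDiff S T) := by
  ext u v
  simp only [switch_adj, Set.mem_symmDiff]
  tauto

lemma frustrated_switch (S : Set V) {u v w : V} (huv : u ≠ v) (huw : u ≠ w) (hvw : v ≠ w) :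
    frustrated (G.switch S) u v w ↔ frustrated G u v w := by
  simp only [frustrated, switch_adj, huv, huw, hvw, ne_eq, not_false_eq_true, true_and]
  by_cases u ∈ S <;> by_cases v ∈ S <;> by_cases w ∈ S <;>
    by_cases G.Adj u v <;> by_cases G.Adj u w <;> by_cases G.Adj v w <;> simp [*, Nat.odd_iff]

lemma not_switch_neighborSet_adj (v w : V) : ¬ (G.switch (G.neighborSet v)).Adj v w := by
  simp

lemma frustrated_iff_of_forall_not_adj {v : V} (hv : ∀ w, ¬ G.Adj v w) (a b : V) :
    frustrated G v a b ↔ G.Adj a b := by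
  by_cases h : G.Adj a b <;> simp [frustrated, hv, h]

section

open scoped Classical

variable [DecidableEq V]

noncomputable def edgesIn (s : Finset V) : Finset (Finset V) :=
  {p ∈ s.powersetCard 2 | G.IsClique (p : Set V)}

lemma subset_of_mem_edgesIn {s p : Finset V} (h : p ∈ G.edgesIn s) : p ⊆ s :=
  (mem_powersetCard.1 (mem_filter.1 h).1).1

lemma card_of_mem_edgesIn {s p : Finset V} (h : p ∈ G.edgesIn s) : #p = 2 :=
  (mem_powersetCard.1 (mem_filter.1 h).1).2

lemma mem_edgesIn_univ [Fintype V] {p : Finset V} :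
    p ∈ G.edgesIn univ ↔ ∃ a b, G.Adj a b ∧ p = {a, b} := by
  simp only [edgesIn, mem_filter, mem_powersetCard_univ, card_eq_two]
  constructor
  · rintro ⟨⟨a, b, hab, rfl⟩, hp⟩
    exact ⟨a, b, by simpa [hab] using hp, rfl⟩
  · rintro ⟨a, b, hab, rfl⟩
    exact ⟨⟨a, b, hab.ne, rfl⟩, by simp [hab]⟩

lemma edgesIn_eq_filter_subset [Fintype V] (s : Finset V) :
    G.edgesIn s = {p ∈ G.edgesIn univ | p ⊆ s} := by
  ext p
  simp only [edgesIn, mem_filter, mem_powersetCard, subset_univ, true_and]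
  tauto

lemma edgesIn_mono {s t : Finset V} (h : s ⊆ t) : G.edgesIn s ⊆ G.edgesIn t :=
  filter_subset_filter _ (powersetCard_mono h)

lemma eq_of_mem_edgesIn_of_ne {s t p q : Finset V} (hs : #s = 3) (ht : #t = 3) (hpq : p ≠ q)
    (hps : p ∈ G.edgesIn s) (hqs : q ∈ G.edgesIn s) (hpt : p ∈ G.edgesIn t)
    (hqt : q ∈ G.edgesIn t) : s = t := by
  have hspan : 2 < #(p ∪ q) :=
    two_lt_card_union (G.card_of_mem_edgesIn hps) (G.card_of_mem_edgesIn hqs) hpq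
  have hs' := eq_of_subset_of_card_le
    (union_subset (G.subset_of_mem_edgesIn hps) (G.subset_of_mem_edgesIn hqs)) (by omega)
  have ht' := eq_of_subset_of_card_le
    (union_subset (G.subset_of_mem_edgesIn hpt) (G.subset_of_mem_edgesIn hqt)) (by omega)
  exact hs'.symm.trans ht'

lemma frustrated_iff_odd_card_edgesIn {u v w : V} (huv : u ≠ v) (huw : u ≠ w) (hvw : v ≠ w) :
    frustrated G u v w ↔ Odd #(G.edgesIn {u, v, w}) := by
  have h₁ : ({u, v} : Finset V) ∉ ({{u, w}, {v, w}} : Finset (Finset V)) := by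
    simp only [mem_insert, mem_singleton, Finset.ext_iff, not_or, not_forall]
    exact ⟨⟨v, by simp [huv.symm, hvw]⟩, ⟨u, by simp [huv, huw]⟩⟩
  have h₂ : ({u, w} : Finset V) ∉ ({{v, w}} : Finset (Finset V)) := by
    simp only [mem_singleton, Finset.ext_iff, not_forall]
    exact ⟨u, by simp [huv, huw]⟩
  rw [frustrated, edgesIn, powersetCard_two_triple huv huw hvw, card_filter, sum_insert h₁,
    sum_insert h₂, sum_singleton]
  simp only [coe_pair, isClique_pair, huv, huw, hvw, ne_eq, not_false_eq_true, forall_const,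
    add_assoc]

variable [Fintype V]

noncomputable def frustratedSets : Finset (Finset V) :=
  {s ∈ univ.powersetCard 3 | Odd #(G.edgesIn s)}

lemma card_of_mem_frustratedSets {s : Finset V} (hs : s ∈ G.frustratedSets) : #s = 3 :=
  mem_powersetCard_univ.1 (mem_filter.1 hs).1

lemma triple_mem_frustratedSets_iff {u v w : V} (huv : u ≠ v) (huw : u ≠ w) (hvw : v ≠ w) :
    {u, v, w} ∈ G.frustratedSets ↔ frustrated G u v w := by
  rw [frustratedSets, mem_filter, G.frustrated_iff_odd_card_edgesIn huv huw hvw,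
    mem_powersetCard_univ, card_eq_three]
  exact and_iff_right ⟨u, v, w, huv, huw, hvw, rfl⟩

lemma fCount_eq_card_frustratedSets : fCount G = #G.frustratedSets := by
  rw [fCount, frustratedSets]
  congr 1
  refine filter_congr fun s hs => ⟨?_, fun hodd => ?_⟩
  · rintro ⟨u, v, w, huv, huw, hvw, rfl, h⟩
    exact (G.frustrated_iff_odd_card_edgesIn huv huw hvw).1 h
  · obtain ⟨u, v, w, huv, huw, hvw, rfl⟩ := card_eq_three.1 (mem_powersetCard_univ.1 hs)
    exact ⟨u, v, w, huv, huw, hvw, rfl, (G.frustrated_iff_odd_card_edgesIn huv huw hvw).2 hodd⟩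

lemma frustratedSets_switch (S : Set V) : (G.switch S).frustratedSets = G.frustratedSets := by
  refine filter_congr fun s hs => ?_
  obtain ⟨u, v, w, huv, huw, hvw, rfl⟩ := card_eq_three.1 (mem_powersetCard_univ.1 hs)
  rw [← frustrated_iff_odd_card_edgesIn _ huv huw hvw,
    ← frustrated_iff_odd_card_edgesIn _ huv huw hvw, frustrated_switch _ _ huv huw hvw]

lemma fCount_switch (S : Set V) : fCount (G.switch S) = fCount G := by
  rw [fCount_eq_card_frustratedSets, fCount_eq_card_frustratedSets, frustratedSets_switch]

lemma sum_card_edgesIn :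
    ∑ s ∈ univ.powersetCard 3, #(G.edgesIn s) = #(G.edgesIn univ) * (Fintype.card V - 2) := by
  calc ∑ s ∈ univ.powersetCard 3, #(G.edgesIn s)
      = ∑ s ∈ univ.powersetCard 3, ∑ p ∈ G.edgesIn univ, if p ⊆ s then 1 else 0 :=
        sum_congr rfl fun s _ => by rw [edgesIn_eq_filter_subset, card_filter]
    _ = ∑ p ∈ G.edgesIn univ, #{s ∈ univ.powersetCard 3 | p ⊆ s} := by
        rw [sum_comm]; simp only [card_filter]
    _ = ∑ _p ∈ G.edgesIn univ, (Fintype.card V - 2) := sum_congr rfl fun p hp => by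
        obtain ⟨a, b, hab, rfl⟩ := G.mem_edgesIn_univ.1 hp
        simpa [card_pair hab.ne] using card_filter_superset_powersetCard_succ {a, b}
    _ = #(G.edgesIn univ) * (Fintype.card V - 2) := by rw [sum_const, smul_eq_mul]

lemma fCount_le_card_edgesIn_mul : fCount G ≤ #(G.edgesIn univ) * (Fintype.card V - 2) := by
  rw [fCount_eq_card_frustratedSets, ← sum_card_edgesIn]
  exact card_filter_odd_le_sum _ _

lemma fCount_modEq : fCount G ≡ #(G.edgesIn univ) * (Fintype.card V - 2) [MOD 2] := by
  rw [fCount_eq_card_frustratedSets, ← sum_card_edgesIn]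
  exact card_filter_odd_modEq_sum _ _

lemma sum_choose_two_card_edgesIn_le :
    ∑ s ∈ univ.powersetCard 3, (#(G.edgesIn s)).choose 2 ≤ (#(G.edgesIn univ)).choose 2 := by
  simp_rw [← card_powersetCard]
  rw [← card_biUnion]
  · exact card_le_card (biUnion_subset.2 fun s _ =>
      powersetCard_mono (G.edgesIn_mono (subset_univ s)))
  · intro s hs t ht hst
    refine Finset.disjoint_left.2 fun P hPs hPt => hst ?_
    obtain ⟨hPs, hP⟩ := mem_powersetCard.1 hPs
    obtain ⟨p, q, hpq, rfl⟩ := card_eq_two.1 hP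
    rw [insert_subset_iff, singleton_subset_iff] at hPs
    rw [mem_powersetCard, insert_subset_iff, singleton_subset_iff] at hPt
    exact G.eq_of_mem_edgesIn_of_ne (mem_powersetCard_univ.1 hs) (mem_powersetCard_univ.1 ht) hpq
      hPs.1 hPs.2 hPt.1.1 hPt.1.2

lemma card_edgesIn_mul_le_fCount_add :
    #(G.edgesIn univ) * (Fintype.card V - 2) ≤ fCount G + 2 * (#(G.edgesIn univ)).choose 2 := by
  rw [fCount_eq_card_frustratedSets, ← sum_card_edgesIn]
  calc _ ≤ #G.frustratedSets + 2 * ∑ s ∈ univ.powersetCard 3, (#(G.edgesIn s)).choose 2 :=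
        sum_le_card_filter_odd_add_two_mul_sum_choose_two _ _
    _ ≤ _ := by gcongr; exact G.sum_choose_two_card_edgesIn_le

lemma card_filter_mem_frustratedSets_of_forall_not_adj {v : V} (hv : ∀ w, ¬ G.Adj v w) :
    #{s ∈ G.frustratedSets | v ∈ s} = #(G.edgesIn univ) := by
  symm
  refine card_nbij' (insert v) (fun s => s.erase v) (fun p hp => ?_) (fun s hs => ?_)
    (fun p hp => ?_) fun s hs => insert_erase (mem_filter.1 hs).2
  · obtain ⟨a, b, hab, rfl⟩ := G.mem_edgesIn_univ.1 hp
    have hva : v ≠ a := fun h => hv b (h ▸ hab)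
    have hvb : v ≠ b := fun h => hv a (h ▸ hab.symm)
    refine mem_filter.2 ⟨?_, mem_insert_self _ _⟩
    rw [G.triple_mem_frustratedSets_iff hva hvb hab.ne, G.frustrated_iff_of_forall_not_adj hv]
    exact hab
  · obtain ⟨hsF, hvs⟩ := mem_filter.1 hs
    have hcard : #(s.erase v) = 2 := by
      rw [card_erase_of_mem hvs, G.card_of_mem_frustratedSets hsF]
    obtain ⟨a, b, hab, hs'⟩ := card_eq_two.1 hcard
    have ha : a ∈ s.erase v := hs' ▸ mem_insert_self a {b}
    have hb : b ∈ s.erase v := hs' ▸ mem_insert_of_mem (mem_singleton_self b)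
    rw [← insert_erase hvs, hs', G.triple_mem_frustratedSets_iff (ne_of_mem_erase ha).symm
      (ne_of_mem_erase hb).symm hab, G.frustrated_iff_of_forall_not_adj hv] at hsF
    exact G.mem_edgesIn_univ.2 ⟨a, b, hsF, hs'⟩
  · obtain ⟨a, b, hab, rfl⟩ := G.mem_edgesIn_univ.1 hp
    refine erase_insert ?_
    simp only [mem_insert, mem_singleton, not_or]
    exact ⟨fun h => hv b (h ▸ hab), fun h => hv a (h ▸ hab.symm)⟩

def IsSwitchingMinimal : Prop :=
  ∀ S, #(G.edgesIn univ) ≤ #((G.switch S).edgesIn univ)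

lemma exists_isSwitchingMinimal_switch : ∃ S, (G.switch S).IsSwitchingMinimal := by
  obtain ⟨S, hS⟩ := Finite.exists_min fun S : Set V => #((G.switch S).edgesIn univ)
  exact ⟨S, fun T => by rw [switch_switch]; exact hS _⟩

variable {G}

lemma IsSwitchingMinimal.card_edgesIn_le_card_filter_mem_frustratedSets
    (hG : G.IsSwitchingMinimal) (v : V) :
    #(G.edgesIn univ) ≤ #{s ∈ G.frustratedSets | v ∈ s} :=
  calc #(G.edgesIn univ) ≤ #((G.switch (G.neighborSet v)).edgesIn univ) := hG _
    _ = #{s ∈ (G.switch (G.neighborSet v)).frustratedSets | v ∈ s} :=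
      (card_filter_mem_frustratedSets_of_forall_not_adj _ (G.not_switch_neighborSet_adj v)).symm
    _ = #{s ∈ G.frustratedSets | v ∈ s} := by rw [frustratedSets_switch]

lemma IsSwitchingMinimal.card_mul_card_edgesIn_le_three_mul_fCount (hG : G.IsSwitchingMinimal) :
    Fintype.card V * #(G.edgesIn univ) ≤ 3 * fCount G :=
  calc Fintype.card V * #(G.edgesIn univ) = ∑ _v : V, #(G.edgesIn univ) := by simp
    _ ≤ ∑ v, #{s ∈ G.frustratedSets | v ∈ s} :=
      sum_le_sum fun v _ => hG.card_edgesIn_le_card_filter_mem_frustratedSets v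
    _ = ∑ s ∈ G.frustratedSets, #s := sum_card_filter_mem _
    _ = 3 * fCount G := by
      rw [sum_congr rfl fun s hs => G.card_of_mem_frustratedSets hs, sum_const,
        smul_eq_mul, mul_comm, fCount_eq_card_frustratedSets]

end

end SimpleGraph

lemma gap_value_ne_of_bounds {n s m f : ℕ} (hno : Odd n) (hs1 : 1 ≤ s)
    (hs : ((s : ℤ) - 1) * ((n : ℤ) - 2) + 2 < ((s : ℤ) + 1) * ((n : ℤ) - s - 2))
    (hle : f ≤ m * (n - 2)) (hmod : f ≡ m * (n - 2) [MOD 2])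
    (hlow : m * (n - 2) ≤ f + 2 * m.choose 2) (hdeg : n * m ≤ 3 * f) :
    f ≠ (s - 1) * (n - 2) + 2 := by
  rintro rfl
  have hs1' : (1 : ℤ) ≤ s := by exact_mod_cast hs1
  have hquad : (s : ℤ) * s + s + 7 ≤ 2 * n := by nlinarith
  have hn : (5 : ℤ) ≤ n := by nlinarith
  have hn2 : 2 ≤ n := by omega
  have hms : m ≠ s := by
    rintro rfl
    obtain ⟨t, rfl⟩ : ∃ t, m = t + 1 := ⟨m - 1, by omega⟩
    rw [add_tsub_cancel_right, add_one_mul] at hmod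
    have h := Nat.ModEq.add_left_cancel' _ hmod
    rw [Nat.odd_iff] at hno
    unfold Nat.ModEq at h
    omega
  rcases hms.lt_or_gt with hsmall | hbig
  · have : m * (n - 2) ≤ (s - 1) * (n - 2) := Nat.mul_le_mul_right _ (by omega)
    omega
  rcases le_or_gt (m + s + 2) n with hmid | hlarge
  · rw [Nat.two_mul_choose_two] at hlow
    zify [hs1, (by omega : 1 ≤ m), hn2] at hlow hbig hmid
    nlinarith
  · zify [hs1, hn2] at hdeg hlarge
    nlinarith [sq_nonneg ((s : ℤ) * (s - 3)), sq_nonneg (4 * (s : ℤ) - 14)]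

theorem odd_case_gap_value_not_realisable_general
    (n : ℕ) (hno : Odd n) (s : ℕ) (hs1 : 1 ≤ s)
    (hs : ((s : ℤ) - 1) * ((n : ℤ) - 2) + 2 < ((s : ℤ) + 1) * ((n : ℤ) - s - 2)) :
    (∀ G : SimpleGraph (Fin n), fCount G ≠ (s - 1) * (n - 2) + 1) ∨
    (∀ G : SimpleGraph (Fin n), fCount G ≠ (s - 1) * (n - 2) + 2) := by
  right
  intro G
  obtain ⟨S, hS⟩ := G.exists_isSwitchingMinimal_switch
  rw [← G.fCount_switch S]
  have hle := (G.switch S).fCount_le_card_edgesIn_mul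
  have hmod := (G.switch S).fCount_modEq
  have hlow := (G.switch S).card_edgesIn_mul_le_fCount_add
  have hdeg := hS.card_mul_card_edgesIn_le_three_mul_fCount
  rw [Fintype.card_fin] at hle hmod hlow hdeg
  exact gap_value_ne_of_bounds hno hs1 hs hle hmod hlow hdeg

theorem odd_case_gap_value_not_realisable
    (n : ℕ) (hn : 5 ≤ n) (hno : Odd n) (s : ℕ) (hs1 : 1 ≤ s)
    (hs : ((s : ℤ) - 1) * ((n : ℤ) - 2) + 2 < ((s : ℤ) + 1) * ((n : ℤ) - s - 2))
    (hmax : ∀ t : ℕ, 1 ≤ t →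
      ((t : ℤ) - 1) * ((n : ℤ) - 2) + 2 < ((t : ℤ) + 1) * ((n : ℤ) - t - 2) → t ≤ s) :
    (∀ G : SimpleGraph (Fin n), fCount G ≠ (s - 1) * (n - 2) + 1) ∨
    (∀ G : SimpleGraph (Fin n), fCount G ≠ (s - 1) * (n - 2) + 2) :=
  odd_case_gap_value_not_realisable_general n hno s hs1 hs
end

section
/- For every n ∈ ℕ and every simple graph G on n vertices, it is not the case that 0 < f(G) < n − 2. -/
/-!
Fix a frustrated triple `T = {u, v, w}`. On any four vertices each pair lies in exactly two of
the four triples, so the number of frustrated triples among them is even; hence every vertex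
`x ∉ T` lies in a frustrated triple `s ⊆ T ∪ {x}`. Distinct `x` give distinct `s`, so a graph with
a frustrated triple has at least `1 + (n - 3) = n - 2` of them.
-/

open Finset

lemma frustrated.with_fourth_vertex {V : Type*} {G : SimpleGraph V} {u v w : V}
    (h : frustrated G u v w) (x : V) :
    frustrated G u v x ∨ frustrated G u w x ∨ frustrated G v w x := by
  by_contra! hx
  obtain ⟨huvx, huwx, hvwx⟩ := hx
  simp only [frustrated, Nat.odd_iff] at h huvx huwx hvwx
  split_ifs at h huvx huwx hvwx <;> omega

section FrustratedTriples

variable {V : Type*} [Fintype V] [DecidableEq V] (G : SimpleGraph V)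

noncomputable def frustratedTriples : Finset (Finset V) := by
  classical
  exact (univ.powersetCard 3).filter fun s : Finset V =>
    ∃ u v w : V, u ≠ v ∧ u ≠ w ∧ v ≠ w ∧ s = {u, v, w} ∧ frustrated G u v w

lemma fCount_eq_card_frustratedTriples : fCount G = #(frustratedTriples G) := rfl

variable {G}

lemma mem_frustratedTriples {s : Finset V} :
    s ∈ frustratedTriples G ↔
      ∃ u v w : V, u ≠ v ∧ u ≠ w ∧ v ≠ w ∧ s = {u, v, w} ∧ frustrated G u v w := by
  classical
  rw [frustratedTriples, mem_filter, mem_powersetCard, and_iff_right_iff_imp]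
  rintro ⟨u, v, w, huv, huw, hvw, rfl, -⟩
  exact ⟨subset_univ _, card_eq_three.mpr ⟨u, v, w, huv, huw, hvw, rfl⟩⟩

lemma insert_mem_frustratedTriples {u v w : V} (huv : u ≠ v) (huw : u ≠ w) (hvw : v ≠ w)
    (h : frustrated G u v w) : {u, v, w} ∈ frustratedTriples G :=
  mem_frustratedTriples.mpr ⟨u, v, w, huv, huw, hvw, rfl, h⟩

lemma frustrated.exists_mem_frustratedTriples {u v w x : V} (h : frustrated G u v w)
    (huv : u ≠ v) (huw : u ≠ w) (hvw : v ≠ w) (hx : x ∉ ({u, v, w} : Finset V)) :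
    ∃ s ∈ frustratedTriples G, x ∈ s ∧ s ⊆ insert x {u, v, w} := by
  simp only [mem_insert, mem_singleton, not_or] at hx
  rcases h.with_fourth_vertex x with h' | h' | h' <;>
  · refine ⟨_, insert_mem_frustratedTriples ?_ ?_ ?_ h', by simp, ?_⟩ <;> grind

theorem card_sub_two_le_fCount (h : 0 < fCount G) : Fintype.card V - 2 ≤ fCount G := by
  rw [fCount_eq_card_frustratedTriples] at h ⊢
  obtain ⟨T, hT⟩ := card_pos.mp h
  obtain ⟨u, v, w, huv, huw, hvw, rfl, hf⟩ := mem_frustratedTriples.mp hT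
  choose! F hF hxF hFsub using fun x (hx : x ∈ univ \ {u, v, w}) =>
    hf.exists_mem_frustratedTriples huv huw hvw (mem_sdiff.mp hx).2
  have hmaps : ∀ x ∈ univ \ {u, v, w}, F x ∈ (frustratedTriples G).erase {u, v, w} :=
    fun x hx => mem_erase.mpr ⟨fun hFx => (mem_sdiff.mp hx).2 (hFx ▸ hxF x hx), hF x hx⟩
  have hinj : Set.InjOn F (univ \ {u, v, w} : Finset V) := by
    intro x hx y hy hxy
    rcases mem_insert.mp (hFsub y hy (hxy ▸ hxF x hx)) with rfl | hxT
    · rfl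
    · exact absurd hxT (mem_sdiff.mp hx).2
  have hcard := card_le_card_of_injOn F hmaps hinj
  rw [card_sdiff_of_subset (subset_univ _), card_univ,
    card_eq_three.mpr ⟨u, v, w, huv, huw, hvw, rfl⟩, card_erase_of_mem hT] at hcard
  omega

end FrustratedTriples

theorem fCount_not_in_open_interval
    (n : ℕ) (G : SimpleGraph (Fin n)) :
    ¬ (0 < fCount G ∧ fCount G < n - 2) := by
  rintro ⟨hpos, hlt⟩
  have hle := card_sub_two_le_fCount hpos
  rw [Fintype.card_fin] at hle
  omega
end
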